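/- There exists a constant C₄ > 0 such that f′(x)/f(x) ≥ C₄ (1−x)^(−1−κ) for all x ∈ (1/2, 1), where f(M) = √(q(M)/p(M)). -/

import Mathlib

open Real Set MeasureTheory

/-- `q(M) = (p(M)/M) ∫₀^M s^a / ((1-s)^b p(s)²) ds`. -/
noncomputable def qfun (p : ℝ → ℝ) (a b : ℝ) (M : ℝ) : ℝ :=
  p M / M * ∫ s in (0:ℝ)..M, s ^ a / ((1 - s) ^ b * p s ^ 2)

/-!
Write `g(s) = s^a / ((1-s)^b p(s)²)` and `I(M) = ∫₀^M g`, so that `q/p = I(M)/M` and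
`f'/f = (x g(x) - I(x)) / (2 x I(x))`. Since `g` is strictly increasing, the numerator is bounded
below by a positive constant, which handles `x` away from `1`. Near `1` the hypothesis on `p'/p`
makes `(1-s)^{1+κ} g(s)` grow at rate at least `c g(s)`; integrating gives
`I(x) ≲ (1-x)^{1+κ} g(x)`, i.e. `g(x)/I(x) ≳ (1-x)^{-1-κ}`, which dominates the term `1/x`.
-/

open Filter Topology

noncomputable def qIntegrand (p : ℝ → ℝ) (a b s : ℝ) : ℝ := s ^ a / ((1 - s) ^ b * p s ^ 2)

noncomputable def qIntegral (p : ℝ → ℝ) (a b M : ℝ) : ℝ := ∫ s in (0:ℝ)..M, qIntegrand p a b s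

section
variable {p p' : ℝ → ℝ} {a b : ℝ}

lemma qfun_div_eq {M : ℝ} (hM : M ≠ 0) (hpM : p M ≠ 0) :
    qfun p a b M / p M = qIntegral p a b M / M := by
  change p M / M * qIntegral p a b M / p M = _
  field_simp

lemma qIntegrand_denom_pos (hppos : ∀ s ∈ Ico (0:ℝ) 1, 0 < p s) {s : ℝ}
    (hs : s ∈ Ico (0:ℝ) 1) : 0 < (1 - s) ^ b * p s ^ 2 := by
  have := hppos s hs
  have : 0 < 1 - s := sub_pos.2 hs.2
  positivity

lemma qIntegrand_nonneg (hppos : ∀ s ∈ Ico (0:ℝ) 1, 0 < p s) {s : ℝ}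
    (hs : s ∈ Ico (0:ℝ) 1) : 0 ≤ qIntegrand p a b s :=
  div_nonneg (rpow_nonneg hs.1 a) (qIntegrand_denom_pos hppos hs).le

lemma qIntegrand_pos (hppos : ∀ s ∈ Ico (0:ℝ) 1, 0 < p s) {s : ℝ}
    (hs : s ∈ Ioo (0:ℝ) 1) : 0 < qIntegrand p a b s :=
  div_pos (rpow_pos_of_pos hs.1 a) (qIntegrand_denom_pos hppos (Ioo_subset_Ico_self hs))

lemma qIntegrand_continuousOn (ha : 0 < a) (hpc : ContinuousOn p (Ico 0 1))
    (hppos : ∀ s ∈ Ico (0:ℝ) 1, 0 < p s) : ContinuousOn (qIntegrand p a b) (Ico 0 1) := by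
  refine ContinuousOn.div (continuous_id.rpow_const fun _ => Or.inr ha.le).continuousOn
    (ContinuousOn.mul ?_ (hpc.pow 2)) fun s hs => (qIntegrand_denom_pos hppos hs).ne'
  exact (continuousOn_const.sub continuousOn_id).rpow_const fun _ hs => Or.inl (sub_pos.2 hs.2).ne'

lemma qIntegrand_strictMonoOn (ha : 0 < a) (hb : 0 ≤ b) (hpa : AntitoneOn p (Ico 0 1))
    (hppos : ∀ s ∈ Ico (0:ℝ) 1, 0 < p s) : StrictMonoOn (qIntegrand p a b) (Ico 0 1) := by
  intro s hs t ht hst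
  have hden : (1 - t) ^ b * p t ^ 2 ≤ (1 - s) ^ b * p s ^ 2 :=
    mul_le_mul (rpow_le_rpow (sub_nonneg.2 ht.2.le) (by linarith) hb)
      (pow_le_pow_left₀ (hppos t ht).le (hpa hs ht hst.le) 2) (by positivity)
      (rpow_nonneg (sub_nonneg.2 hs.2.le) b)
  calc qIntegrand p a b s ≤ s ^ a / ((1 - t) ^ b * p t ^ 2) :=
        div_le_div_of_nonneg_left (rpow_nonneg hs.1 a) (qIntegrand_denom_pos hppos ht) hden
    _ < qIntegrand p a b t :=
        div_lt_div_of_pos_right (rpow_lt_rpow hs.1 hst ha) (qIntegrand_denom_pos hppos ht)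

lemma qIntegrand_intervalIntegrable (ha : 0 < a) (hpc : ContinuousOn p (Ico 0 1))
    (hppos : ∀ s ∈ Ico (0:ℝ) 1, 0 < p s) {u v : ℝ} (hu : u ∈ Ico (0:ℝ) 1)
    (hv : v ∈ Ico (0:ℝ) 1) : IntervalIntegrable (qIntegrand p a b) volume u v :=
  ((qIntegrand_continuousOn ha hpc hppos).mono
    (ordConnected_Ico.uIcc_subset hu hv)).intervalIntegrable

lemma qIntegral_hasDerivAt (ha : 0 < a) (hpc : ContinuousOn p (Ico 0 1))
    (hppos : ∀ s ∈ Ico (0:ℝ) 1, 0 < p s) {x : ℝ} (hx : x ∈ Ioo (0:ℝ) 1) :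
    HasDerivAt (qIntegral p a b) (qIntegrand p a b x) x := by
  have hcont := (qIntegrand_continuousOn (b := b) ha hpc hppos).mono Ioo_subset_Ico_self
  exact intervalIntegral.integral_hasDerivAt_right
    (qIntegrand_intervalIntegrable ha hpc hppos (left_mem_Ico.2 one_pos) (Ioo_subset_Ico_self hx))
    (hcont.stronglyMeasurableAtFilter isOpen_Ioo x hx) (hcont.continuousAt (isOpen_Ioo.mem_nhds hx))

lemma qIntegral_pos (ha : 0 < a) (hpc : ContinuousOn p (Ico 0 1))
    (hppos : ∀ s ∈ Ico (0:ℝ) 1, 0 < p s) {x : ℝ} (hx : x ∈ Ioo (0:ℝ) 1) :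
    0 < qIntegral p a b x :=
  intervalIntegral.intervalIntegral_pos_of_pos_on
    (qIntegrand_intervalIntegrable ha hpc hppos (left_mem_Ico.2 one_pos) (Ioo_subset_Ico_self hx))
    (fun _ hs => qIntegrand_pos hppos ⟨hs.1, hs.2.trans hx.2⟩) hx.1

lemma qIntegral_monotoneOn (ha : 0 < a) (hpc : ContinuousOn p (Ico 0 1))
    (hppos : ∀ s ∈ Ico (0:ℝ) 1, 0 < p s) : MonotoneOn (qIntegral p a b) (Ico 0 1) :=
  fun _ hx _ hy hxy => intervalIntegral.integral_mono_interval le_rfl hx.1 hxy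
    ((ae_restrict_iff' measurableSet_Ioc).2 (ae_of_all _ fun _ hs =>
      qIntegrand_nonneg hppos ⟨hs.1.le, hs.2.trans_lt hy.2⟩))
    (qIntegrand_intervalIntegrable ha hpc hppos (left_mem_Ico.2 one_pos) hy)

lemma deriv_sqrt_div_sqrt {u : ℝ → ℝ} {u' x : ℝ} (hu : HasDerivAt u u' x) (hux : 0 < u x) :
    deriv (fun y => √(u y)) x / √(u x) = u' / (2 * u x) := by
  rw [(hu.sqrt hux.ne').deriv, div_div, mul_assoc, Real.mul_self_sqrt hux.le]

lemma deriv_sqrt_qfun_div (ha : 0 < a) (hpc : ContinuousOn p (Ico 0 1))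
    (hppos : ∀ s ∈ Ico (0:ℝ) 1, 0 < p s) {x : ℝ} (hx : x ∈ Ioo (0:ℝ) 1) :
    deriv (fun M => √(qfun p a b M / p M)) x / √(qfun p a b x / p x) =
      (x * qIntegrand p a b x - qIntegral p a b x) / (2 * x * qIntegral p a b x) := by
  have hI := qIntegral_pos (b := b) ha hpc hppos hx
  have hq : ∀ M ∈ Ioo (0:ℝ) 1, qfun p a b M / p M = qIntegral p a b M / M := fun M hM =>
    qfun_div_eq hM.1.ne' (hppos M (Ioo_subset_Ico_self hM)).ne'
  have hev : (fun M => √(qfun p a b M / p M)) =ᶠ[𝓝 x] fun M => √(qIntegral p a b M / M) := by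
    filter_upwards [isOpen_Ioo.mem_nhds hx] with M hM
    rw [hq M hM]
  rw [hev.deriv_eq, hq x hx, deriv_sqrt_div_sqrt (u := fun M => qIntegral p a b M / M)
    ((qIntegral_hasDerivAt ha hpc hppos hx).div (hasDerivAt_id' x) hx.1.ne') (div_pos hI hx.1)]
  field_simp

lemma qIntegral_le_mul_add_mul (ha : 0 < a) (hb : 0 ≤ b) (hpc : ContinuousOn p (Ico 0 1))
    (hpa : AntitoneOn p (Ico 0 1)) (hppos : ∀ s ∈ Ico (0:ℝ) 1, 0 < p s) {t x : ℝ}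
    (ht : 0 ≤ t) (htx : t ≤ x) (hx : x < 1) :
    qIntegral p a b x ≤ t * qIntegrand p a b t + (x - t) * qIntegrand p a b x := by
  have hmono := (qIntegrand_strictMonoOn ha hb hpa hppos).monotoneOn
  have ht1 : t ∈ Ico (0:ℝ) 1 := ⟨ht, htx.trans_lt hx⟩
  have hx1 : x ∈ Ico (0:ℝ) 1 := ⟨ht.trans htx, hx⟩
  have h0 : (0:ℝ) ∈ Ico (0:ℝ) 1 := left_mem_Ico.2 one_pos
  have hleft : ∫ s in (0:ℝ)..t, qIntegrand p a b s ≤ ∫ _ in (0:ℝ)..t, qIntegrand p a b t :=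
    intervalIntegral.integral_mono_on ht (qIntegrand_intervalIntegrable ha hpc hppos h0 ht1)
      intervalIntegrable_const fun s hs => hmono ⟨hs.1, hs.2.trans_lt ht1.2⟩ ht1 hs.2
  have hright : ∫ s in t..x, qIntegrand p a b s ≤ ∫ _ in t..x, qIntegrand p a b x :=
    intervalIntegral.integral_mono_on htx (qIntegrand_intervalIntegrable ha hpc hppos ht1 hx1)
      intervalIntegrable_const fun s hs => hmono ⟨ht.trans hs.1, hs.2.trans_lt hx⟩ hx1 hs.2
  rw [qIntegral, ← intervalIntegral.integral_add_adjacent_intervals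
    (qIntegrand_intervalIntegrable ha hpc hppos h0 ht1)
    (qIntegrand_intervalIntegrable ha hpc hppos ht1 hx1)]
  simp only [intervalIntegral.integral_const, smul_eq_mul, sub_zero] at hleft hright
  linarith

lemma le_mul_qIntegrand_sub_qIntegral (ha : 0 < a) (hb : 0 ≤ b)
    (hpc : ContinuousOn p (Ico 0 1)) (hpa : AntitoneOn p (Ico 0 1))
    (hppos : ∀ s ∈ Ico (0:ℝ) 1, 0 < p s) {x : ℝ} (hx : x ∈ Ico (1/2 : ℝ) 1) :
    (qIntegrand p a b (1/2) - qIntegrand p a b (1/4)) / 4 ≤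
      x * qIntegrand p a b x - qIntegral p a b x := by
  have hmono := (qIntegrand_strictMonoOn ha hb hpa hppos).monotoneOn
  have hhalf : qIntegrand p a b (1/2) ≤ qIntegrand p a b x :=
    hmono (by norm_num) ⟨by linarith [hx.1], hx.2⟩ hx.1
  have := qIntegral_le_mul_add_mul ha hb hpc hpa hppos (t := 1/4) (by norm_num)
    (by linarith [hx.1]) hx.2
  linarith

lemma hasDerivAt_rpow_mul_qIntegrand (r : ℝ) {x : ℝ} (hx : x ∈ Ioo (0:ℝ) 1)
    (hpx : HasDerivAt p (p' x) x) (hp0 : p x ≠ 0) :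
    HasDerivAt (fun s => (1 - s) ^ r * qIntegrand p a b s)
      ((1 - x) ^ r * qIntegrand p a b x * (a / x + (b - r) / (1 - x) - 2 * p' x / p x)) x := by
  have h1x : 1 - x ≠ 0 := (sub_pos.2 hx.2).ne'
  have hsub : HasDerivAt (fun s : ℝ => 1 - s) (-1) x := (hasDerivAt_id' x).const_sub 1
  have := (hsub.rpow_const (p := r) (Or.inl h1x)).mul
    ((hasDerivAt_id' x |>.rpow_const (p := a) (Or.inl hx.1.ne')).div
      ((hsub.rpow_const (p := b) (Or.inl h1x)).mul (hpx.pow 2))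
      (mul_ne_zero (rpow_pos_of_pos (sub_pos.2 hx.2) b).ne' (pow_ne_zero 2 hp0)))
  refine (this : HasDerivAt (fun s => (1 - s) ^ r * qIntegrand p a b s) _ x).congr_deriv ?_
  have hxb : (1 - x) ^ b ≠ 0 := (rpow_pos_of_pos (sub_pos.2 hx.2) b).ne'
  have hx0 : x ≠ 0 := hx.1.ne'
  simp only [qIntegrand, Pi.mul_apply, Pi.div_apply, Pi.pow_apply, Nat.cast_ofNat]
  rw [rpow_sub_one hx.1.ne', rpow_sub_one h1x, rpow_sub_one h1x]
  field_simp
  ring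

lemma mul_qIntegrand_le_rpow_mul_qIntegrand_mul (ha : 0 ≤ a) (hb : 0 ≤ b)
    (hppos : ∀ s ∈ Ico (0:ℝ) 1, 0 < p s) {c r x : ℝ} (hx : x ∈ Ioo (0:ℝ) 1)
    (hL : c ≤ -(r * (1 - x) ^ (r - 1)) + 2 * -((1 - x) ^ r * p' x / p x)) :
    c * qIntegrand p a b x ≤
      (1 - x) ^ r * qIntegrand p a b x * (a / x + (b - r) / (1 - x) - 2 * p' x / p x) := by
  have h1x : 0 < 1 - x := sub_pos.2 hx.2
  have hpx := (hppos x (Ioo_subset_Ico_self hx)).ne'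
  have hsplit : (1 - x) ^ r * qIntegrand p a b x * (a / x + (b - r) / (1 - x) - 2 * p' x / p x) =
      qIntegrand p a b x * ((1 - x) ^ r * (a / x + b / (1 - x)) +
        (-(r * (1 - x) ^ (r - 1)) + 2 * -((1 - x) ^ r * p' x / p x))) := by
    rw [rpow_sub_one h1x.ne']
    field_simp
    ring
  have hab : 0 ≤ (1 - x) ^ r * (a / x + b / (1 - x)) := by
    have := hx.1
    positivity
  rw [hsplit, mul_comm c]
  exact mul_le_mul_of_nonneg_left (by linarith) (qIntegrand_nonneg hppos (Ioo_subset_Ico_self hx))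

lemma integral_qIntegrand_le_sub (ha : 0 < a) (hb : 0 ≤ b) (hpc : ContinuousOn p (Ico 0 1))
    (hppos : ∀ s ∈ Ico (0:ℝ) 1, 0 < p s) (hpd : ∀ x ∈ Ioo (0:ℝ) 1, HasDerivAt p (p' x) x)
    {c r M x : ℝ} (hM : 0 ≤ M) (hMx : M ≤ x) (hx : x < 1)
    (hL : ∀ u ∈ Ioo M x, c ≤ -(r * (1 - u) ^ (r - 1)) + 2 * -((1 - u) ^ r * p' u / p u)) :
    c * ∫ s in M..x, qIntegrand p a b s ≤
      (1 - x) ^ r * qIntegrand p a b x - (1 - M) ^ r * qIntegrand p a b M := by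
  have hsub : Icc M x ⊆ Ico 0 1 := Icc_subset_Ico hM hx
  have hint : ContinuousOn (qIntegrand p a b) (Icc M x) :=
    (qIntegrand_continuousOn ha hpc hppos).mono hsub
  rw [← intervalIntegral.integral_const_mul]
  refine intervalIntegral.integral_le_sub_of_hasDeriv_right_of_le
    (g := fun s => (1 - s) ^ r * qIntegrand p a b s) hMx ?_
    (fun u hu => ?_) (continuousOn_const.mul hint).integrableOn_Icc
    (fun u hu => mul_qIntegrand_le_rpow_mul_qIntegrand_mul ha.le hb hppos
      ⟨hM.trans_lt hu.1, hu.2.trans hx⟩ (hL u hu))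
  · refine ContinuousOn.mul ?_ hint
    exact (continuousOn_const.sub continuousOn_id).rpow_const
      fun s hs => Or.inl (sub_pos.2 (hsub hs).2).ne'
  · have hu1 : u ∈ Ioo (0:ℝ) 1 := ⟨hM.trans_lt hu.1, hu.2.trans hx⟩
    exact (hasDerivAt_rpow_mul_qIntegrand r hu1 (hpd u hu1)
      (hppos u (Ioo_subset_Ico_self hu1)).ne').hasDerivWithinAt

lemma qIntegral_le_mul_rpow_mul_qIntegrand (ha : 0 < a) (hb : 0 ≤ b)
    (hpc : ContinuousOn p (Ico 0 1)) (hppos : ∀ s ∈ Ico (0:ℝ) 1, 0 < p s)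
    (hpd : ∀ x ∈ Ioo (0:ℝ) 1, HasDerivAt p (p' x) x) {c r M x : ℝ} (hc : 0 < c)
    (hM : M ∈ Ioo (0:ℝ) 1)
    (hL : ∀ u ∈ Ioo M 1, c ≤ -(r * (1 - u) ^ (r - 1)) + 2 * -((1 - u) ^ r * p' u / p u))
    (hx : x ∈ Ico M 1) :
    qIntegral p a b x ≤
      (qIntegral p a b M / ((1 - M) ^ r * qIntegrand p a b M) + 1 / c) *
        ((1 - x) ^ r * qIntegrand p a b x) := by
  have hbound := integral_qIntegrand_le_sub ha hb hpc hppos hpd hM.1.le hx.1 hx.2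
    fun u hu => hL u ⟨hu.1, hu.2.trans hx.2⟩
  set wM := (1 - M) ^ r * qIntegrand p a b M
  set wx := (1 - x) ^ r * qIntegrand p a b x
  have hnonneg : 0 ≤ ∫ s in M..x, qIntegrand p a b s :=
    intervalIntegral.integral_nonneg hx.1 fun s hs =>
      qIntegrand_nonneg hppos ⟨hM.1.le.trans hs.1, hs.2.trans_lt hx.2⟩
  have hwM : 0 < wM := mul_pos (rpow_pos_of_pos (sub_pos.2 hM.2) r) (qIntegrand_pos hppos hM)
  have hgrow : wM ≤ wx := by nlinarith
  have hIM := qIntegral_pos (b := b) ha hpc hppos hM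
  have hsplit : qIntegral p a b x = qIntegral p a b M + ∫ s in M..x, qIntegrand p a b s :=
    (intervalIntegral.integral_add_adjacent_intervals
      (qIntegrand_intervalIntegrable ha hpc hppos (left_mem_Ico.2 one_pos) (Ioo_subset_Ico_self hM))
      (qIntegrand_intervalIntegrable ha hpc hppos (Ioo_subset_Ico_self hM)
        ⟨hM.1.le.trans hx.1, hx.2⟩)).symm
  have htail : ∫ s in M..x, qIntegrand p a b s ≤ wx / c := by
    rw [le_div_iff₀ hc]
    linarith
  calc qIntegral p a b x = qIntegral p a b M / wM * wM + ∫ s in M..x, qIntegrand p a b s := by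
        rw [hsplit, div_mul_cancel₀ _ hwM.ne']
    _ ≤ qIntegral p a b M / wM * wx + wx / c := by gcongr
    _ = _ := by ring

lemma one_div_mul_rpow_neg_le_of_le_mul_rpow {g I C r x : ℝ} (hx : x ∈ Ico (1/2 : ℝ) 1) (hI : 0 < I)
    (hC : 0 < C) (hIg : I ≤ C * ((1 - x) ^ r * g)) (hCr : 4 * C * (1 - x) ^ r ≤ 1) :
    1 / (8 * C) * (1 - x) ^ (-r) ≤ (x * g - I) / (2 * x * I) := by
  have hT : 0 < (1 - x) ^ r := rpow_pos_of_pos (sub_pos.2 hx.2) r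
  have hx0 : 0 < x := by linarith [hx.1]
  have hlhs : 1 / (8 * C) * (1 - x) ^ (-r) = x * I / (4 * C * (1 - x) ^ r) / (2 * x * I) := by
    rw [rpow_neg (sub_pos.2 hx.2).le]
    field_simp
    ring
  rw [hlhs]
  gcongr
  rw [div_le_iff₀ (by positivity)]
  nlinarith [mul_le_mul_of_nonneg_left hIg hx0.le, mul_le_mul_of_nonneg_right hCr hI.le,
    mul_le_mul_of_nonneg_right hx.1 hI.le]

lemma exists_pos_mul_rpow_le_of_mem_Icc (ha : 0 < a) (hb : 0 ≤ b)
    (hpc : ContinuousOn p (Ico 0 1)) (hpa : AntitoneOn p (Ico 0 1))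
    (hppos : ∀ s ∈ Ico (0:ℝ) 1, 0 < p s) {e M : ℝ} (he : e ≤ 0) (hM : M ∈ Ico (1/2 : ℝ) 1) :
    ∃ C > 0, ∀ x ∈ Icc (1/2 : ℝ) M, C * (1 - x) ^ e ≤
      (x * qIntegrand p a b x - qIntegral p a b x) / (2 * x * qIntegral p a b x) := by
  set δ := (qIntegrand p a b (1/2) - qIntegrand p a b (1/4)) / 4
  have hδ : 0 < δ := by
    have := qIntegrand_strictMonoOn ha hb hpa hppos (a := a) (b := b)
      (show (1/4 : ℝ) ∈ Ico 0 1 by norm_num) (show (1/2 : ℝ) ∈ Ico 0 1 by norm_num) (by norm_num)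
    simp only [δ]
    linarith
  have hIM := qIntegral_pos (b := b) ha hpc hppos ⟨by linarith [hM.1], hM.2⟩
  have h1M : 0 < 1 - M := sub_pos.2 hM.2
  have h1Me : 0 < (1 - M) ^ e := rpow_pos_of_pos h1M e
  refine ⟨δ / (2 * qIntegral p a b M * (1 - M) ^ e), by positivity, fun x hx => ?_⟩
  have hx1 : x ∈ Ioo (0:ℝ) 1 := ⟨by linarith [hx.1], hx.2.trans_lt hM.2⟩
  have hIx := qIntegral_pos (b := b) ha hpc hppos hx1
  have hIxM := qIntegral_monotoneOn (b := b) ha hpc hppos (Ioo_subset_Ico_self hx1)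
    ⟨by linarith [hM.1], hM.2⟩ hx.2
  have h2xI : 0 < 2 * x * qIntegral p a b x := mul_pos (by linarith [hx1.1]) hIx
  calc δ / (2 * qIntegral p a b M * (1 - M) ^ e) * (1 - x) ^ e
      ≤ δ / (2 * qIntegral p a b M * (1 - M) ^ e) * (1 - M) ^ e := by
        gcongr ?_ * ?_
        exact rpow_le_rpow_of_nonpos h1M (by linarith [hx.2]) he
    _ = δ / (2 * qIntegral p a b M) := by field_simp
    _ ≤ δ / (2 * x * qIntegral p a b x) := by
        gcongr
        nlinarith [hx1.2]
    _ ≤ _ := by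
        gcongr
        exact le_mul_qIntegrand_sub_qIntegral ha hb hpc hpa hppos ⟨hx.1, hx1.2⟩

lemma tendsto_one_sub_rpow_nhdsLT_one {r : ℝ} (hr : 0 < r) :
    Tendsto (fun u : ℝ => (1 - u) ^ r) (𝓝[<] 1) (𝓝 0) := by
  have : ContinuousAt (fun u : ℝ => (1 - u) ^ r) 1 :=
    (continuousAt_const.sub continuousAt_id).rpow_const (Or.inr hr.le)
  simpa [zero_rpow hr.ne'] using this.tendsto.mono_left nhdsWithin_le_nhds

lemma exists_pos_mul_rpow_le_near_one (ha : 0 < a) (hb : 0 ≤ b) (hpc : ContinuousOn p (Ico 0 1))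
    (hppos : ∀ s ∈ Ico (0:ℝ) 1, 0 < p s) (hpd : ∀ x ∈ Ioo (0:ℝ) 1, HasDerivAt p (p' x) x)
    {c r : ℝ} (hc : 0 < c) (hr : 0 < r)
    (hL : ∀ᶠ u in 𝓝[<] 1, c ≤ -(r * (1 - u) ^ (r - 1)) + 2 * -((1 - u) ^ r * p' u / p u)) :
    ∃ M ∈ Ico (1/2 : ℝ) 1, ∃ C > 0, ∀ x ∈ Ioo M 1, C * (1 - x) ^ (-r) ≤
      (x * qIntegrand p a b x - qIntegral p a b x) / (2 * x * qIntegral p a b x) := by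
  obtain ⟨M₀, hM₀, hM₀L⟩ :=
    (mem_nhdsLT_iff_exists_mem_Ico_Ioo_subset (by norm_num : (1/2 : ℝ) < 1)).1 hL
  have hM₀' : M₀ ∈ Ioo (0:ℝ) 1 := ⟨by linarith [hM₀.1], hM₀.2⟩
  have hIM₀ := qIntegral_pos (b := b) ha hpc hppos hM₀'
  have hgM₀ := qIntegrand_pos (a := a) (b := b) hppos hM₀'
  have h1M₀ := rpow_pos_of_pos (sub_pos.2 hM₀.2) r
  set C := qIntegral p a b M₀ / ((1 - M₀) ^ r * qIntegrand p a b M₀) + 1 / c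
  have hC : 0 < C := by positivity
  obtain ⟨M, hM, hMC⟩ := (mem_nhdsLT_iff_exists_mem_Ico_Ioo_subset hM₀.2).1
    ((tendsto_one_sub_rpow_nhdsLT_one hr).eventually
      (eventually_le_nhds (by positivity : 0 < 1 / (4 * C))))
  refine ⟨M, ⟨hM₀.1.trans hM.1, hM.2⟩, 1 / (8 * C), by positivity, fun x hx => ?_⟩
  have hx' : x ∈ Ico M₀ 1 := ⟨hM.1.trans hx.1.le, hx.2⟩
  refine one_div_mul_rpow_neg_le_of_le_mul_rpow ⟨hM₀.1.trans hx'.1, hx.2⟩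
    (qIntegral_pos ha hpc hppos ⟨hM₀'.1.trans_le hx'.1, hx.2⟩) hC
    (qIntegral_le_mul_rpow_mul_qIntegrand ha hb hpc hppos hpd hc hM₀' hM₀L hx') ?_
  have : (1 - x) ^ r ≤ 1 / (4 * C) := hMC hx
  rw [le_div_iff₀ (by positivity)] at this
  linarith

end

theorem f_log_deriv_lower_bound_general (a b : ℝ) (ha : 1 ≤ a) (hb : 1 ≤ b)
    (p p' : ℝ → ℝ) (hpc : ContinuousOn p (Icc 0 1))
    (hpa : AntitoneOn p (Icc 0 1))
    (hppos : ∀ M ∈ Ico (0:ℝ) 1, 0 < p M)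
    (hp' : ∀ M ∈ Ico (0:ℝ) 1, HasDerivWithinAt p (p' M) (Ico 0 1) M)
    (κ c : ℝ) (hκ : 0 < κ) (hc : 0 < c)
    (hlim : Filter.Tendsto (fun M => -((1 - M) ^ (1 + κ) * p' M / p M))
      (nhdsWithin 1 (Iio 1)) (nhds c)) :
    ∃ C₄ > (0:ℝ), ∀ x ∈ Ioo (1/2 : ℝ) 1,
      C₄ * (1 - x) ^ (-1 - κ) ≤
        deriv (fun M => Real.sqrt (qfun p a b M / p M)) x /
          Real.sqrt (qfun p a b x / p x) := by
  have ha0 : 0 < a := by linarith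
  have hb0 : 0 ≤ b := by linarith
  have hpc' : ContinuousOn p (Ico 0 1) := hpc.mono Ico_subset_Icc_self
  have hpd : ∀ x ∈ Ioo (0:ℝ) 1, HasDerivAt p (p' x) x := fun x hx =>
    (hp' x (Ioo_subset_Ico_self hx)).hasDerivAt (Ico_mem_nhds hx.1 hx.2)
  have hL : Tendsto (fun u => -((1 + κ) * (1 - u) ^ (1 + κ - 1)) +
      2 * -((1 - u) ^ (1 + κ) * p' u / p u)) (𝓝[<] 1) (𝓝 (2 * c)) := by
    simpa using ((tendsto_one_sub_rpow_nhdsLT_one hκ).const_mul (1 + κ)).neg.add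
      (hlim.const_mul 2)
  obtain ⟨M, hM, C₁, hC₁, htail⟩ := exists_pos_mul_rpow_le_near_one ha0 hb0 hpc' hppos hpd hc
    (by linarith) (hL.eventually (eventually_ge_nhds (by linarith)))
  obtain ⟨C₀, hC₀, hmiddle⟩ := exists_pos_mul_rpow_le_of_mem_Icc ha0 hb0 hpc'
    (hpa.mono Ico_subset_Icc_self) hppos (by linarith : -1 - κ ≤ 0) hM
  refine ⟨min C₀ C₁, lt_min hC₀ hC₁, fun x hx => ?_⟩
  have h1x : 0 ≤ (1 - x) ^ (-1 - κ) := rpow_nonneg (sub_nonneg.2 hx.2.le) _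
  rw [deriv_sqrt_qfun_div ha0 hpc' hppos ⟨by linarith [hx.1], hx.2⟩]
  rcases le_or_gt x M with hxM | hxM
  · exact (mul_le_mul_of_nonneg_right (min_le_left _ _) h1x).trans (hmiddle x ⟨hx.1.le, hxM⟩)
  · refine (mul_le_mul_of_nonneg_right (min_le_right _ _) h1x).trans ?_
    simpa only [neg_add'] using htail x ⟨hxM, hx.2⟩

/-- There is a constant `C₄ > 0` such that `f′(x)/f(x) ≥ C₄ (1−x)^{−1−κ}` for all
`x ∈ (1/2, 1)`, where `f(M) = √(q(M)/p(M))`. -/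
theorem f_log_deriv_lower_bound (a b : ℝ) (ha : 1 ≤ a) (hb : 1 ≤ b)
    (p p' : ℝ → ℝ) (hpc : ContinuousOn p (Icc 0 1))
    (hpa : AntitoneOn p (Icc 0 1)) (hp1 : p 1 = 0)
    (hppos : ∀ M ∈ Ico (0:ℝ) 1, 0 < p M)
    (hp' : ∀ M ∈ Ico (0:ℝ) 1, HasDerivWithinAt p (p' M) (Ico 0 1) M)
    (hp'c : ContinuousOn p' (Ico 0 1))
    (κ c : ℝ) (hκ : 0 < κ) (hc : 0 < c)
    (hlim : Filter.Tendsto (fun M => -((1 - M) ^ (1 + κ) * p' M / p M))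
      (nhdsWithin 1 (Iio 1)) (nhds c)) :
    ∃ C₄ > (0:ℝ), ∀ x ∈ Ioo (1/2 : ℝ) 1,
      C₄ * (1 - x) ^ (-1 - κ) ≤
        deriv (fun M => Real.sqrt (qfun p a b M / p M)) x /
          Real.sqrt (qfun p a b x / p x) :=
  f_log_deriv_lower_bound_general a b ha hb p p' hpc hpa hppos hp' κ c hκ hc hlim
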